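/- arXiv:0902.4263 — 2 statements merged into one kernel-verified Lean document; each statement's English description precedes it below -/
import Mathlib

section
/- Let N ≥ 2 and let F_N denote the free group of rank N with its standard basis. For g ∈ F_N, let ℓ(g) denote the cyclically reduced length of g, i.e. the minimum of the word lengths (with respect to the standard basis) of the elements in the conjugacy class of g. Let (g_n)_{n∈ℕ} be a sequence of automorphisms of F_N representing pairwise distinct outer automorphisms (for m ≠ n, g_n ∘ g_m⁻¹ is not inner), and let (c_n)_{n∈ℕ} be a sequence of nonnegative real numbers. Suppose that for every nontrivial w ∈ F_N the sequence of real numbers (c_n · ℓ(g_n(w)))_{n∈ℕ} converges. Then c_n → 0 as n → ∞. -/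
/-!
If `c n ↛ 0`, then for infinitely many `n` we have `c n ≥ ε`, and along those `n` the lengths
`ℓ (g n w)` are bounded by some `C` for the finitely many test words `w = xᵢ, xᵢ xⱼ`.
Write `yᵢ = g n xᵢ`. In the Cayley tree the displacement `p ↦ d(p, yᵢ p)` is quasiconvex along
geodesics, so the sets `{p | d(p, yᵢ p) ≤ 3C}` are convex. They also pairwise intersect: at a point
minimising `d(p, yᵢ p) + d(p, yⱼ p)` there is no cancellation between `yᵢ` and `yⱼ` unless both
are cyclically reduced there, so that point lies within `ℓ (yᵢ yⱼ)` of both axes. By Helly's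
theorem for trees, all of them share a point. Conjugating by it moves the tuple `(yᵢ)ᵢ` into a
fixed finite ball, so two of the `g n` differ by an inner automorphism.
-/

/-- An automorphism of a group is inner if it is conjugation by a fixed element. -/
def IsInnerAut {G : Type*} [Group G] (φ : MulAut G) : Prop :=
  ∃ a : G, ∀ x : G, φ x = a * x * a⁻¹

/-- The cyclically reduced length of `g ∈ F_N`: the minimum of the word lengths
(with respect to the standard basis) of the elements conjugate to `g`. -/
noncomputable def cyclicallyReducedLength {N : ℕ} (g : FreeGroup (Fin N)) : ℕ :=
  sInf { k : ℕ | ∃ h : FreeGroup (Fin N), IsConj g h ∧ h.toWord.length = k }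

theorem List.exists_maximal_common_prefix {β : Type*} (l₁ l₂ : List β) :
    ∃ p r₁ r₂, l₁ = p ++ r₁ ∧ l₂ = p ++ r₂ ∧ ∀ a ∈ r₁.head?, ∀ b ∈ r₂.head?, a ≠ b := by
  induction l₁ generalizing l₂ with
  | nil => exact ⟨[], [], l₂, rfl, rfl, by simp⟩
  | cons a t ih =>
    cases l₂ with
    | nil => exact ⟨[], a :: t, [], rfl, rfl, by simp⟩
    | cons b u =>
      by_cases hab : a = b
      · subst hab
        obtain ⟨p, r₁, r₂, h₁, h₂, hne⟩ := ih u
        exact ⟨a :: p, r₁, r₂, by simp [h₁], by simp [h₂], hne⟩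
      · exact ⟨[], a :: t, b :: u, rfl, rfl, by simpa⟩

theorem helly_of_median {X ι : Type*} [Nonempty X] [Finite ι]
    (B : X → X → X → Prop) (hB : ∀ a b c, ∃ m, B a m b ∧ B a m c ∧ B b m c)
    (S : ι → Set X) (hS : ∀ i, ∀ a ∈ S i, ∀ b ∈ S i, ∀ m, B a m b → m ∈ S i)
    (hpair : ∀ i j, (S i ∩ S j).Nonempty) : (⋂ i, S i).Nonempty := by
  classical
  have := Fintype.ofFinite ι
  suffices ∀ s : Finset ι, ∃ x, ∀ i ∈ s, x ∈ S i by
    obtain ⟨x, hx⟩ := this Finset.univ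
    exact ⟨x, Set.mem_iInter.2 fun i => hx i (Finset.mem_univ i)⟩
  intro s
  induction s using Finset.induction_on generalizing S with
  | empty => exact ⟨Classical.arbitrary X, by simp⟩
  | insert j s _ ih =>
    rcases s.eq_empty_or_nonempty with rfl | ⟨i₀, hi₀⟩
    · obtain ⟨x, hx, -⟩ := hpair j j
      exact ⟨x, by simpa using hx⟩
    -- Replace every `S i` by `S i ∩ S j`; these still intersect pairwise, at medians.
    obtain ⟨x, hx⟩ := ih (fun i => S i ∩ S j)
      (fun i a ha b hb m hm => ⟨hS i a ha.1 b hb.1 m hm, hS j a ha.2 b hb.2 m hm⟩)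
      (fun i k => by
        obtain ⟨a, ha⟩ := hpair i k
        obtain ⟨b, hb⟩ := hpair i j
        obtain ⟨c, hc⟩ := hpair k j
        obtain ⟨m, hab, hac, hbc⟩ := hB a b c
        exact ⟨m, ⟨hS i a ha.1 b hb.1 m hab, hS j b hb.2 c hc.2 m hbc⟩,
          ⟨hS k a ha.2 c hc.1 m hac, hS j b hb.2 c hc.2 m hbc⟩⟩)
    refine ⟨x, fun i hi => ?_⟩
    rcases Finset.mem_insert.1 hi with rfl | hi
    exacts [(hx i₀ hi₀).2, (hx i hi).1]

namespace FreeGroup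

variable {α : Type*}

theorem inv_mk_singleton (s : α × Bool) : (mk [s])⁻¹ = mk [(s.1, !s.2)] := by
  simp [inv_mk, invRev]

theorem isCyclicallyReduced_append {l₁ l₂ : List (α × Bool)} (h₁ : IsReduced l₁)
    (h₂ : IsReduced l₂) (hne₁ : l₁ ≠ []) (hne₂ : l₂ ≠ [])
    (hj₁ : ∀ a ∈ l₁.getLast?, ∀ b ∈ l₂.head?, a.1 = b.1 → a.2 = b.2)
    (hj₂ : ∀ a ∈ l₂.getLast?, ∀ b ∈ l₁.head?, a.1 = b.1 → a.2 = b.2) :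
    IsCyclicallyReduced (l₁ ++ l₂) := by
  refine ⟨List.isChain_append.2 ⟨h₁, h₂, hj₁⟩, ?_⟩
  rwa [List.getLast?_append_of_ne_nil _ hne₂, List.head?_append_of_ne_nil _ hne₁]

theorem isInnerAut_mul_inv_of_forall_of {φ ψ : MulAut (FreeGroup α)} (a : FreeGroup α)
    (h : ∀ i, ψ (of i) = a * φ (of i) * a⁻¹) : IsInnerAut (ψ * φ⁻¹) := by
  have hext : ψ.toMonoidHom = (MulAut.conj a).toMonoidHom.comp φ.toMonoidHom :=
    ext_hom _ _ fun i => by simpa using h i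
  exact ⟨a, fun x => by simpa using DFunLike.congr_fun hext (φ⁻¹ x)⟩

section DecidableEq

variable [DecidableEq α]

theorem toWord_mul_of_isReduced {x y : FreeGroup α} (h : IsReduced (x.toWord ++ y.toWord)) :
    (x * y).toWord = x.toWord ++ y.toWord := by
  rw [toWord_mul, h.reduce_eq]

theorem norm_mul_of_isReduced {x y : FreeGroup α} (h : IsReduced (x.toWord ++ y.toWord)) :
    norm (x * y) = norm x + norm y := by
  simp [norm, toWord_mul_of_isReduced h]

theorem of_mul_of_ne_one (i j : α) : of i * of j ≠ 1 := by
  intro h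
  have := norm_mul_of_isReduced (x := of i) (y := of j) (by simp [toWord_of, IsReduced])
  simp [h] at this

theorem finite_setOf_norm_le [Finite α] (C : ℕ) :
    {x : FreeGroup α | norm x ≤ C}.Finite :=
  (List.finite_length_le _ C).preimage toWord_injective.injOn

theorem eq_mk_mul_mk_of_toWord_eq_cons {x : FreeGroup α} {s : α × Bool} {t : List (α × Bool)}
    (h : x.toWord = s :: t) : x = mk [s] * mk t := by
  rw [mul_mk, List.singleton_append, ← h, mk_toWord]

theorem norm_inv_mul_eq_add_iff {u v : FreeGroup α} :
    norm (u⁻¹ * v) = norm u + norm v ↔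
      ∀ s ∈ u.toWord.head?, ∀ t ∈ v.toWord.head?, s ≠ t := by
  constructor
  · rintro h s hs t ht rfl
    obtain ⟨u', hu⟩ := List.head?_eq_some_iff.1 hs
    obtain ⟨v', hv⟩ := List.head?_eq_some_iff.1 ht
    have hcancel : u⁻¹ * v = (mk u')⁻¹ * mk v' := by
      rw [eq_mk_mul_mk_of_toWord_eq_cons hu, eq_mk_mul_mk_of_toWord_eq_cons hv]; group
    have hle := norm_mul_le (mk u')⁻¹ (mk v')
    rw [norm_inv_eq, ← hcancel, h] at hle
    have := norm_mk_le (L₁ := u')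
    have := norm_mk_le (L₁ := v')
    simp only [norm, hu, hv, List.length_cons] at *
    omega
  · intro h
    rw [← norm_inv_eq (x := u)]
    refine norm_mul_of_isReduced (List.isChain_append.2 ⟨isReduced_toWord, isReduced_toWord, ?_⟩)
    intro p hp q hq hpq
    rw [toWord_inv, invRev, List.getLast?_reverse, List.head?_map, Option.mem_def,
      Option.map_eq_some_iff] at hp
    obtain ⟨s, hs, rfl⟩ := hp
    by_contra hne
    exact h s hs q hq (Prod.ext hpq (by simpa using hne))

theorem norm_conj_letter_le_of_head {x : FreeGroup α} {s : α × Bool}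
    (h : x.toWord.head? = some s) : norm ((mk [s])⁻¹ * x * mk [s]) ≤ norm x := by
  obtain ⟨t, ht⟩ := List.head?_eq_some_iff.1 h
  have hconj : (mk [s])⁻¹ * x * mk [s] = mk (t ++ [s]) := by
    rw [eq_mk_mul_mk_of_toWord_eq_cons ht, ← mul_mk]; group
  rw [hconj]
  exact norm_mk_le.trans (by simp [norm, ht])

theorem norm_conj_letter_le_of_getLast {x : FreeGroup α} {s : α × Bool}
    (h : x.toWord.getLast? = some (s.1, !s.2)) : norm ((mk [s])⁻¹ * x * mk [s]) ≤ norm x := by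
  obtain ⟨t, ht⟩ := List.getLast?_eq_some_iff.1 h
  have hconj : (mk [s])⁻¹ * x * mk [s] = mk ((s.1, !s.2) :: t) := by
    have hx : x = mk t * (mk [s])⁻¹ := by rw [inv_mk_singleton, mul_mk, ← ht, mk_toWord]
    rw [hx, mul_assoc, mul_assoc, inv_mul_cancel, mul_one, inv_mk_singleton, mul_mk]
    rfl
  rw [hconj]
  exact norm_mk_le.trans (by simp [norm, ht])

theorem norm_conj_letter_add_two_le {x : FreeGroup α} {s : α × Bool}
    (hhead : x.toWord.head? = some s) (hlast : x.toWord.getLast? = some (s.1, !s.2)) :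
    norm ((mk [s])⁻¹ * x * mk [s]) + 2 ≤ norm x := by
  obtain ⟨r, hr⟩ := List.head?_eq_some_iff.1 hhead
  obtain ⟨t, rfl⟩ : ∃ t, r = t ++ [(s.1, !s.2)] := by
    rcases List.eq_nil_or_concat r with rfl | ⟨t, b, rfl⟩
    · simp [hr, Prod.ext_iff] at hlast
    · rw [hr, List.concat_eq_append, ← List.cons_append, List.getLast?_concat] at hlast
      exact ⟨t, by rw [Option.some_inj.1 hlast, List.concat_eq_append]⟩
  have hconj : (mk [s])⁻¹ * x * mk [s] = mk t := by
    rw [eq_mk_mul_mk_of_toWord_eq_cons hr, ← mul_mk, ← inv_mk_singleton]; group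
  rw [hconj]
  have := norm_mk_le (L₁ := t)
  simp only [norm, hr, List.length_cons, List.length_append] at *
  omega

theorem norm_pow_le (x : FreeGroup α) (n : ℕ) : norm (x ^ n) ≤ n * norm x := by
  induction n with
  | zero => simp
  | succ n ih =>
    rw [pow_succ, add_mul, one_mul]
    exact (norm_mul_le _ _).trans (by omega)

theorem norm_pow_of_isCyclicallyReduced {x : FreeGroup α} (h : IsCyclicallyReduced x.toWord)
    (n : ℕ) : norm (x ^ n) = n * norm x := by
  simp [norm, toWord_pow, (h.flatten_replicate n).isReduced.reduce_eq]

/-- The powers of `x` grow at rate exactly `norm x`, while those of `g⁻¹ x g` grow at rate at most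
`norm (g⁻¹ * x * g)`, up to the constant `2 * norm g`. -/
theorem norm_le_norm_conj_of_isCyclicallyReduced {x : FreeGroup α}
    (h : IsCyclicallyReduced x.toWord) (g : FreeGroup α) : norm x ≤ norm (g⁻¹ * x * g) := by
  set y := g⁻¹ * x * g
  have hpow (n : ℕ) : n * norm x ≤ 2 * norm g + n * norm y := by
    have hx : x ^ n = g * y ^ n * g⁻¹ := by
      rw [← conj_pow, show g * (g⁻¹ * x * g) * g⁻¹ = x by group]
    have h₁ := norm_mul_le (g * y ^ n) g⁻¹
    have h₂ := norm_mul_le g (y ^ n)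
    have h₃ := norm_pow_le y n
    rw [← hx, norm_pow_of_isCyclicallyReduced h, norm_inv_eq] at h₁
    omega
  have := hpow (2 * norm g + 1)
  nlinarith

/-- The word of `a` is `s ⋯ s⁻¹`, so conjugating by the letter `s` shortens `a` by two; by `hmin`
it then lengthens `b` by two, so `b` neither starts with `s` nor ends with `s⁻¹`. -/
theorem isCyclicallyReduced_toWord_append_of_forall_letter {a b : FreeGroup α}
    (ha : ¬ IsCyclicallyReduced a.toWord)
    (hmin : ∀ s : α × Bool, norm a + norm b ≤
      norm ((mk [s])⁻¹ * a * mk [s]) + norm ((mk [s])⁻¹ * b * mk [s])) :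
    IsCyclicallyReduced (a.toWord ++ b.toWord) := by
  simp only [isCyclicallyReduced_iff, isReduced_toWord, true_and, not_forall] at ha
  obtain ⟨p, hp, s, hs, hp₁, hp₂⟩ := ha
  obtain rfl : p = (s.1, !s.2) := Prod.ext hp₁ (Bool.eq_not_of_ne hp₂)
  have hb : norm b + 2 ≤ norm ((mk [s])⁻¹ * b * mk [s]) := by
    have := norm_conj_letter_add_two_le hs hp
    have := hmin s
    omega
  have hb₁ : b ≠ 1 := by
    rintro rfl
    simp only [mul_one, inv_mul_cancel, norm_one] at hb
    omega
  have hhead : b.toWord.head? ≠ some s := fun h => by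
    have := norm_conj_letter_le_of_head h; omega
  have hlast : b.toWord.getLast? ≠ some (s.1, !s.2) := fun h => by
    have := norm_conj_letter_le_of_getLast h; omega
  refine isCyclicallyReduced_append isReduced_toWord isReduced_toWord
    (fun h => by simp [h] at hs)
    (by simpa using hb₁) ?_ ?_
  · intro p hp' q hq hpq
    obtain rfl : p = (s.1, !s.2) := Option.mem_unique hp' hp
    by_contra hqs
    exact hhead (by
      rw [Option.mem_def.1 hq]
      exact congrArg some (Prod.ext hpq.symm (Bool.ne_not.1 (Ne.symm hqs))))
  · intro p hp' q hq hpq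
    obtain rfl : q = s := Option.mem_unique hq hs
    by_contra hps
    exact hlast (by
      rw [Option.mem_def.1 hp']
      exact congrArg some (Prod.ext hpq (Bool.eq_not_of_ne hps)))

/-- `m` lies on the geodesic from `a` to `b` in the Cayley tree, with `d(x, y) = norm (x⁻¹ * y)`. -/
def Between (a m b : FreeGroup α) : Prop :=
  norm (a⁻¹ * m) + norm (m⁻¹ * b) = norm (a⁻¹ * b)

theorem between_mul_left_iff (g a m b : FreeGroup α) :
    Between (g * a) (g * m) (g * b) ↔ Between a m b := by
  simp [Between, mul_assoc]

theorem exists_median_one (b c : FreeGroup α) :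
    ∃ m, Between 1 m b ∧ Between 1 m c ∧ Between b m c := by
  obtain ⟨p, r₁, r₂, hb, hc, hne⟩ := List.exists_maximal_common_prefix b.toWord c.toWord
  have hword {x : FreeGroup α} {r : List (α × Bool)} (hx : x.toWord = p ++ r) :
      (mk p)⁻¹ * x = mk r ∧ (mk r).toWord = r ∧ (mk p).toWord = p := by
    have hred : IsReduced (p ++ r) := hx ▸ isReduced_toWord
    refine ⟨?_, ?_, ?_⟩
    · rw [← mk_toWord (x := x), hx, ← mul_mk]; group
    · rw [toWord_mk, (hred.infix ⟨p, [], by simp⟩).reduce_eq]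
    · rw [toWord_mk, (hred.infix ⟨[], r, by simp⟩).reduce_eq]
  obtain ⟨hub, hu, hp⟩ := hword hb
  obtain ⟨hvc, hv, -⟩ := hword hc
  refine ⟨mk p, ?_, ?_, ?_⟩
  · rw [Between, inv_one, one_mul, one_mul, hub]
    simp [norm, hu, hp, hb]
  · rw [Between, inv_one, one_mul, one_mul, hvc]
    simp [norm, hv, hp, hc]
  · have hbc : b⁻¹ * c = (mk r₁)⁻¹ * mk r₂ := by rw [← hub, ← hvc]; group
    have hbm : b⁻¹ * mk p = (mk r₁)⁻¹ := by rw [← hub]; group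
    rw [Between, hbc, hbm, hvc, norm_inv_mul_eq_add_iff.2 (by rwa [hu, hv]), norm_inv_eq]

theorem exists_median (a b c : FreeGroup α) :
    ∃ m, Between a m b ∧ Between a m c ∧ Between b m c := by
  obtain ⟨m, h₁, h₂, h₃⟩ := exists_median_one (a⁻¹ * b) (a⁻¹ * c)
  refine ⟨a * m, ?_, ?_, ?_⟩ <;>
  · rw [← between_mul_left_iff a⁻¹]
    simpa

theorem norm_le_norm_conj_of_head?_ne {a y : FreeGroup α}
    (h : ∀ s ∈ a.toWord.head?, ∀ t ∈ y.toWord.head?, s ≠ t) : norm y ≤ norm (a⁻¹ * y * a) := by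
  have hay := norm_inv_mul_eq_add_iff.2 h
  have := norm_mul_le (a⁻¹ * y * a) a⁻¹
  rw [show a⁻¹ * y * a * a⁻¹ = a⁻¹ * y by group, norm_inv_eq] at this
  omega

theorem norm_le_max_of_between_one {a b : FreeGroup α} (h : Between a 1 b) (y : FreeGroup α) :
    norm y ≤ max (norm (a⁻¹ * y * a)) (norm (b⁻¹ * y * b)) := by
  have hab : ∀ s ∈ a.toWord.head?, ∀ t ∈ b.toWord.head?, s ≠ t :=
    norm_inv_mul_eq_add_iff.1 (by simpa [Between] using h.symm)
  -- Conjugating by `a` can only shorten `y` if `y` starts with the first letter of `a`.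
  by_contra! hlt
  obtain ⟨s, hs, t, ht, rfl⟩ : ∃ s ∈ a.toWord.head?, ∃ t ∈ y.toWord.head?, s = t := by
    by_contra! H
    exact (norm_le_norm_conj_of_head?_ne H).not_gt (lt_of_le_of_lt (le_max_left _ _) hlt)
  obtain ⟨s', hs', t', ht', rfl⟩ : ∃ s ∈ b.toWord.head?, ∃ t ∈ y.toWord.head?, s = t := by
    by_contra! H
    exact (norm_le_norm_conj_of_head?_ne H).not_gt (lt_of_le_of_lt (le_max_right _ _) hlt)
  exact hab s hs s' hs' (Option.mem_unique ht ht')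

theorem norm_conj_le_max_of_between {a m b : FreeGroup α} (h : Between a m b) (y : FreeGroup α) :
    norm (m⁻¹ * y * m) ≤ max (norm (a⁻¹ * y * a)) (norm (b⁻¹ * y * b)) := by
  have h₁ : Between (m⁻¹ * a) 1 (m⁻¹ * b) := by
    rwa [← inv_mul_cancel m, between_mul_left_iff]
  simpa [mul_assoc] using norm_le_max_of_between_one h₁ (m⁻¹ * y * m)

theorem exists_ne_isInnerAut_of_norm_conj_le [Finite α] {ι : Type*}
    {S : Set ι} (hS : S.Infinite) (φ : ι → MulAut (FreeGroup α)) (C : ℕ)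
    (h : ∀ n ∈ S, ∃ k, ∀ i, norm (k⁻¹ * φ n (of i) * k) ≤ C) :
    ∃ m ∈ S, ∃ n ∈ S, m ≠ n ∧ IsInnerAut (φ n * (φ m)⁻¹) := by
  choose! k hk using h
  obtain ⟨m, hm, n, hn, hmn, heq⟩ := hS.exists_ne_map_eq_of_mapsTo
    (f := fun n i => (k n)⁻¹ * φ n (of i) * k n)
    (fun n hn => Set.mem_univ_pi.2 (hk n hn)) (Set.Finite.pi fun _ => finite_setOf_norm_le C)
  refine ⟨m, hm, n, hn, hmn, isInnerAut_mul_inv_of_forall_of (k n * (k m)⁻¹) fun i => ?_⟩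
  have hi := congr_fun heq i
  calc φ n (of i) = k n * ((k n)⁻¹ * φ n (of i) * k n) * (k n)⁻¹ := by group
    _ = k n * (k m)⁻¹ * φ m (of i) * (k n * (k m)⁻¹)⁻¹ := by rw [← hi]; group

end DecidableEq

section CyclicallyReducedLength

variable {N : ℕ}

local notation "ℓ" => cyclicallyReducedLength

theorem cyclicallyReducedLength_le_norm_conj (x g : FreeGroup (Fin N)) :
    ℓ x ≤ norm (g⁻¹ * x * g) :=
  Nat.sInf_le ⟨_, isConj_iff.2 ⟨g⁻¹, by group⟩, rfl⟩

theorem cyclicallyReducedLength_conj (x g : FreeGroup (Fin N)) : ℓ (g⁻¹ * x * g) = ℓ x := by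
  have hx : IsConj x (g⁻¹ * x * g) := isConj_iff.2 ⟨g⁻¹, by group⟩
  unfold cyclicallyReducedLength
  congr 1
  ext k
  exact ⟨fun ⟨h, hh, hk⟩ => ⟨h, hx.trans hh, hk⟩, fun ⟨h, hh, hk⟩ => ⟨h, hx.symm.trans hh, hk⟩⟩

theorem cyclicallyReducedLength_eq_norm {x : FreeGroup (Fin N)}
    (h : IsCyclicallyReduced x.toWord) : ℓ x = norm x := by
  refine le_antisymm (by simpa using cyclicallyReducedLength_le_norm_conj x 1) ?_
  refine le_csInf ⟨_, x, IsConj.refl x, rfl⟩ ?_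
  rintro k ⟨y, hy, rfl⟩
  obtain ⟨c, rfl⟩ := isConj_iff.1 hy
  simpa [norm] using norm_le_norm_conj_of_isCyclicallyReduced h c⁻¹

theorem cyclicallyReducedLength_mul_eq {a b : FreeGroup (Fin N)}
    (h : IsCyclicallyReduced (a.toWord ++ b.toWord)) : ℓ (a * b) = norm a + norm b := by
  rw [cyclicallyReducedLength_eq_norm (toWord_mul_of_isReduced h.isReduced ▸ h),
    norm_mul_of_isReduced h.isReduced]

theorem cyclicallyReducedLength_mul_comm (a b : FreeGroup (Fin N)) : ℓ (a * b) = ℓ (b * a) := by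
  simpa [mul_assoc] using (cyclicallyReducedLength_conj (a * b) a).symm

theorem norm_add_norm_le_of_forall_letter {a b : FreeGroup (Fin N)}
    (hmin : ∀ s : Fin N × Bool, norm a + norm b ≤
      norm ((mk [s])⁻¹ * a * mk [s]) + norm ((mk [s])⁻¹ * b * mk [s])) :
    norm a + norm b ≤ ℓ a + ℓ b + 2 * ℓ (a * b) := by
  by_cases ha : IsCyclicallyReduced a.toWord
  · by_cases hb : IsCyclicallyReduced b.toWord
    · rw [cyclicallyReducedLength_eq_norm ha, cyclicallyReducedLength_eq_norm hb]
      omega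
    · have hba := cyclicallyReducedLength_mul_eq
        (isCyclicallyReduced_toWord_append_of_forall_letter (b := a) hb fun s => by
          have := hmin s; omega)
      rw [← cyclicallyReducedLength_mul_comm] at hba
      omega
  · have hab := cyclicallyReducedLength_mul_eq
      (isCyclicallyReduced_toWord_append_of_forall_letter ha hmin)
    omega

theorem exists_norm_conj_add_norm_conj_le (a b : FreeGroup (Fin N)) :
    ∃ g, norm (g⁻¹ * a * g) + norm (g⁻¹ * b * g) ≤ ℓ a + ℓ b + 2 * ℓ (a * b) := by
  set F : FreeGroup (Fin N) → ℕ := fun g => norm (g⁻¹ * a * g) + norm (g⁻¹ * b * g)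
  refine ⟨Function.argmin F, ?_⟩
  set g := Function.argmin F
  have hconj (x : FreeGroup (Fin N)) (s : Fin N × Bool) :
      (g * mk [s])⁻¹ * x * (g * mk [s]) = (mk [s])⁻¹ * (g⁻¹ * x * g) * mk [s] := by group
  have h := norm_add_norm_le_of_forall_letter (a := g⁻¹ * a * g) (b := g⁻¹ * b * g) fun s => by
    simpa only [F, hconj] using Function.argmin_le F (g * mk [s])
  rwa [cyclicallyReducedLength_conj, cyclicallyReducedLength_conj,
    show g⁻¹ * a * g * (g⁻¹ * b * g) = g⁻¹ * (a * b) * g by group,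
    cyclicallyReducedLength_conj] at h

theorem exists_norm_conj_le_of_cyclicallyReducedLength_le {ι : Type*} [Finite ι]
    (y : ι → FreeGroup (Fin N)) (C : ℕ) (h₁ : ∀ i, ℓ (y i) ≤ C)
    (h₂ : ∀ i j, ℓ (y i * y j) ≤ C) : ∃ g, ∀ i, norm (g⁻¹ * y i * g) ≤ 3 * C := by
  obtain ⟨g, hg⟩ := helly_of_median Between exists_median
    (fun i => {g | norm (g⁻¹ * y i * g) ≤ 3 * C})
    (fun i a ha b hb m hm => (norm_conj_le_max_of_between hm (y i)).trans (max_le ha hb))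
    (fun i j => by
      obtain ⟨g, hg⟩ := exists_norm_conj_add_norm_conj_le (y i) (y j)
      have := cyclicallyReducedLength_le_norm_conj (y i) g
      have := cyclicallyReducedLength_le_norm_conj (y j) g
      have := h₁ i
      have := h₁ j
      have := h₂ i j
      exact ⟨g, show _ ≤ 3 * C by omega, show _ ≤ 3 * C by omega⟩)
  exact ⟨g, fun i => Set.mem_iInter.1 hg i⟩

end CyclicallyReducedLength

end FreeGroup

open Filter Topology

theorem exists_frequently_le_of_not_tendsto_zero {ι : Type*} {l : Filter ι} {c : ι → ℝ}
    (hc : ∀ n, 0 ≤ c n) (h : ¬ Tendsto c l (𝓝 0)) : ∃ ε > 0, ∃ᶠ n in l, ε ≤ c n := by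
  by_contra! H
  refine h (tendsto_order.2 ⟨fun a ha => .of_forall fun n => ha.trans_le (hc n), fun ε hε => ?_⟩)
  simpa [Filter.not_frequently] using H ε hε

theorem exists_eventually_le_of_tendsto_mul {ι κ : Type*} [Finite κ] {l : Filter ι} {ε : ℝ}
    (hε : 0 < ε) (c : ι → ℝ) (x : κ → ι → ℕ)
    (hx : ∀ k, ∃ L, Tendsto (fun n => c n * x k n) l (𝓝 L)) :
    ∃ C : ℕ, ∀ᶠ n in l, ε ≤ c n → ∀ k, x k n ≤ C := by
  choose L hL using hx
  obtain ⟨M, hM⟩ := Finite.exists_le L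
  refine ⟨⌈(M + 1) / ε⌉₊, ?_⟩
  filter_upwards [eventually_all.2 fun k => (hL k).eventually_lt_const (lt_add_one (L k))]
    with n hn hεn k
  have hx : (x k n : ℝ) ≤ (M + 1) / ε := by
    rw [le_div_iff₀ hε]
    nlinarith [hn k, hM k, (x k n).cast_nonneg (α := ℝ)]
  exact_mod_cast hx.trans (Nat.le_ceil _)

theorem tendsto_scalars_zero_of_convergence_general
    (N : ℕ)
    (g : ℕ → MulAut (FreeGroup (Fin N)))
    (hdist : ∀ m n : ℕ, m ≠ n → ¬ IsInnerAut (g n * (g m)⁻¹))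
    (c : ℕ → ℝ) (hc : ∀ n, 0 ≤ c n)
    (hconv : ∀ w : FreeGroup (Fin N), w ≠ 1 →
      ∃ L : ℝ, Filter.Tendsto
        (fun n : ℕ => c n * (cyclicallyReducedLength ((g n) w) : ℝ))
        Filter.atTop (nhds L)) :
    Filter.Tendsto c Filter.atTop (nhds 0) := by
  by_contra hne
  obtain ⟨ε, hε, hfreq⟩ := exists_frequently_le_of_not_tendsto_zero hc hne
  let w : Fin N ⊕ (Fin N × Fin N) → FreeGroup (Fin N) :=
    Sum.elim FreeGroup.of fun p => FreeGroup.of p.1 * FreeGroup.of p.2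
  have hw : ∀ k, w k ≠ 1 := by
    rintro (i | ⟨i, j⟩)
    exacts [FreeGroup.of_ne_one i, FreeGroup.of_mul_of_ne_one i j]
  obtain ⟨C, hC⟩ := exists_eventually_le_of_tendsto_mul hε c
    (fun k n => cyclicallyReducedLength (g n (w k))) fun k => hconv (w k) (hw k)
  have hS : {n | ∀ k, cyclicallyReducedLength (g n (w k)) ≤ C}.Infinite :=
    Nat.frequently_atTop_iff_infinite.1 ((hfreq.and_eventually hC).mono fun n h => h.2 h.1)
  obtain ⟨m, -, n, -, hmn, hinner⟩ := FreeGroup.exists_ne_isInnerAut_of_norm_conj_le hS g (3 * C)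
    fun n hn => FreeGroup.exists_norm_conj_le_of_cyclicallyReducedLength_le _ C
      (fun i => hn (.inl i))
      fun i j => by simpa [w] using hn (.inr (i, j))
  exact hdist m n hmn hinner

/-- If `(g_n)` is a sequence of automorphisms of `F_N` (`N ≥ 2`) representing pairwise
distinct outer automorphisms, `c_n ≥ 0`, and for every nontrivial `w` the sequence
`c_n · ℓ(g_n(w))` converges, then `c_n → 0`. -/
theorem tendsto_scalars_zero_of_convergence
    (N : ℕ) (hN : 2 ≤ N)
    (g : ℕ → MulAut (FreeGroup (Fin N)))
    (hdist : ∀ m n : ℕ, m ≠ n → ¬ IsInnerAut (g n * (g m)⁻¹))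
    (c : ℕ → ℝ) (hc : ∀ n, 0 ≤ c n)
    (hconv : ∀ w : FreeGroup (Fin N), w ≠ 1 →
      ∃ L : ℝ, Filter.Tendsto
        (fun n : ℕ => c n * (cyclicallyReducedLength ((g n) w) : ℝ))
        Filter.atTop (nhds L)) :
    Filter.Tendsto c Filter.atTop (nhds 0) :=
  tendsto_scalars_zero_of_convergence_general N g hdist c hc hconv
end

section
/- Let G be a group acting by homeomorphisms on a topological space X (i.e., a G-action on X for which the action map of each group element is continuous). Suppose there are an element φ ∈ G and two distinct points p₊, p₋ ∈ X such that for every x ∈ X with x ≠ p₋ the sequence (φⁿ · x)_{n∈ℕ} converges to p₊. Suppose further that there exists ψ ∈ G such that ψ · p₊ ∉ {p₊, p₋} and ψ · p₋ ∉ {p₊, p₋}. Let Λ denote the closure of the orbit G · p₊ in X. Then: (1) Λ is contained in every nonempty closed G-invariant subset of X; hence Λ is the unique minimal nonempty closed G-invariant subset of X; and (2) for every y ∈ Λ, the orbit G · y is dense in Λ. -/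
/-- Abstract North–South dynamics argument: if `G` acts by homeomorphisms on `X`,
some `φ ∈ G` attracts every point `x ≠ p₋` to `p₊`, and some `ψ ∈ G` moves both
`p₊` and `p₋` off `{p₊, p₋}`, then the closure `Λ` of the orbit of `p₊` is
contained in every nonempty closed `G`-invariant subset of `X` (hence is the
unique minimal such set), and every `G`-orbit of a point of `Λ` is dense in `Λ`. -/
theorem limit_set_minimal_and_orbit_dense
    {G X : Type*} [Group G] [TopologicalSpace X] [MulAction G X]
    (hcont : ∀ g : G, Continuous fun x : X => g • x)
    (φ : G) (pPlus pMinus : X) (hne : pPlus ≠ pMinus)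
    (hNS : ∀ x : X, x ≠ pMinus →
      Filter.Tendsto (fun n : ℕ => φ ^ n • x) Filter.atTop (nhds pPlus))
    (ψ : G)
    (hψPlus : ψ • pPlus ∉ ({pPlus, pMinus} : Set X))
    (hψMinus : ψ • pMinus ∉ ({pPlus, pMinus} : Set X)) :
    (∀ S : Set X, S.Nonempty → IsClosed S → (∀ g : G, ∀ s ∈ S, g • s ∈ S) →
        closure (MulAction.orbit G pPlus) ⊆ S) ∧
    (∀ y ∈ closure (MulAction.orbit G pPlus),
        closure (MulAction.orbit G pPlus) ⊆ closure (MulAction.orbit G y)) := by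
  have main : ∀ S : Set X, S.Nonempty → IsClosed S → (∀ g : G, ∀ s ∈ S, g • s ∈ S) →
      closure (MulAction.orbit G pPlus) ⊆ S := by
    intro S ⟨s, hs⟩ hScl hSinv
    -- find a point of S different from pMinus
    obtain ⟨t, htS, htne⟩ : ∃ t ∈ S, t ≠ pMinus := by
      by_cases h : s = pMinus
      · refine ⟨ψ • s, hSinv ψ s hs, ?_⟩
        rw [h]
        intro hc
        exact hψMinus (by simp [hc])
      · exact ⟨s, hs, h⟩
    have hmem : ∀ n : ℕ, φ ^ n • t ∈ S := fun n => hSinv (φ ^ n) t htS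
    have hp : pPlus ∈ S :=
      hScl.mem_of_tendsto (hNS t htne) (Filter.Eventually.of_forall hmem)
    have horb : MulAction.orbit G pPlus ⊆ S := by
      rintro _ ⟨g, rfl⟩
      exact hSinv g pPlus hp
    exact closure_minimal horb hScl
  refine ⟨main, fun y hy => ?_⟩
  refine main _ ⟨y, subset_closure (MulAction.mem_orbit_self y)⟩ isClosed_closure ?_
  intro g s hsc
  have : (fun x : X => g • x) '' closure (MulAction.orbit G y) ⊆
      closure (MulAction.orbit G y) := by
    refine (image_closure_subset_closure_image (f := fun x : X => g • x) (hcont g)).trans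
      (closure_mono ?_)
    rintro _ ⟨_, ⟨h, rfl⟩, rfl⟩
    exact ⟨g * h, by simp [mul_smul]⟩
  exact this ⟨s, hsc, rfl⟩
end
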